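/- arXiv:2605.04428 — 7 statements merged into one kernel-verified Lean document; each statement's English description precedes it below -/
import Mathlib

section
/- Let f be a non-negative submodular function on a finite ground set N, and let A_1, ..., A_ℓ be pairwise disjoint subsets of N. Then for any set O ⊆ N, the total loss ∑_{i=1}^ℓ [f(O) - f(O ∪ A_i)] is at most f(O). Consequently there exists an index i* with f(O ∪ A_{i*}) ≥ (1 - 1/ℓ)·f(O). -/
def Submodular {N : Type*} [DecidableEq N] (f : Finset N → ℝ) : Prop :=
  ∀ X Y : Finset N, f (X ∪ Y) + f (X ∩ Y) ≤ f X + f Y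

/-- for non-negative submodular `f` and pairwise disjoint sets
`A 1, ..., A ℓ`, the total loss `∑ i, (f O - f (O ∪ A i))` is at most `f O`,
and hence some index `i*` satisfies `f (O ∪ A i*) ≥ (1 - 1/ℓ) f O`. -/
theorem stmt1 {N : Type*} [DecidableEq N] [Fintype N]
    (f : Finset N → ℝ) (hsub : Submodular f) (hnn : ∀ S : Finset N, 0 ≤ f S)
    (ℓ : ℕ) (hℓ : 1 ≤ ℓ) (A : Fin ℓ → Finset N)
    (hdisj : ∀ i j : Fin ℓ, i ≠ j → Disjoint (A i) (A j))
    (O : Finset N) :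
    (∑ i : Fin ℓ, (f O - f (O ∪ A i)) ≤ f O) ∧
      ∃ i : Fin ℓ, (1 - 1 / (ℓ : ℝ)) * f O ≤ f (O ∪ A i) := by
  classical
  set g : ℕ → Finset N := fun i => if h : i < ℓ then A ⟨i, h⟩ else ∅ with hg
  have key : ∀ k, k ≤ ℓ →
      ∑ i ∈ Finset.range k, (f O - f (O ∪ g i)) ≤
        f O - f (O ∪ (Finset.range k).biUnion g) := by
    intro k
    induction k with
    | zero => simp
    | succ k ih =>
      intro hk
      have hk' : k ≤ ℓ := Nat.le_of_succ_le hk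
      have hkℓ : k < ℓ := hk
      have hdis : Disjoint (g k) ((Finset.range k).biUnion g) := by
        rw [Finset.disjoint_biUnion_right]
        intro i hi
        have hik := Finset.mem_range.mp hi
        have hiℓ : i < ℓ := lt_of_lt_of_le (Finset.mem_range.mp hi) hk'
        have : (⟨k, hkℓ⟩ : Fin ℓ) ≠ ⟨i, hiℓ⟩ := by
          simp [Fin.ext_iff]
          omega
        simpa [hg, hkℓ, hiℓ] using hdisj _ _ this
      have hsm := hsub (O ∪ g k) (O ∪ (Finset.range k).biUnion g)
      have hinter : (O ∪ g k) ∩ (O ∪ (Finset.range k).biUnion g) = O := by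
        rw [← Finset.union_inter_distrib_left]
        rw [Finset.disjoint_iff_inter_eq_empty.mp hdis]
        simp
      have hunion : (O ∪ g k) ∪ (O ∪ (Finset.range k).biUnion g)
          = O ∪ (Finset.range (k + 1)).biUnion g := by
        rw [Finset.range_add_one, Finset.biUnion_insert]
        ac_rfl
      rw [hinter, hunion] at hsm
      rw [Finset.sum_range_succ]
      have := ih hk'
      linarith
  have hsum : ∑ i : Fin ℓ, (f O - f (O ∪ A i)) ≤ f O := by
    have heq : ∑ i : Fin ℓ, (f O - f (O ∪ A i)) =
        ∑ i ∈ Finset.range ℓ, (f O - f (O ∪ g i)) := by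
      rw [Finset.sum_range fun i => _]
      apply Finset.sum_congr rfl
      intro i _
      simp [hg, i.isLt]
    rw [heq]
    have := key ℓ le_rfl
    have := hnn (O ∪ (Finset.range ℓ).biUnion g)
    linarith
  refine ⟨hsum, ?_⟩
  by_contra h
  push_neg at h
  have hℓR : (0 : ℝ) < (ℓ : ℝ) := by exact_mod_cast hℓ
  have hlt : ∑ i : Fin ℓ, (f O / ℓ) < ∑ i : Fin ℓ, (f O - f (O ∪ A i)) := by
    apply Finset.sum_lt_sum_of_nonempty
    · exact Finset.univ_nonempty_iff.mpr ⟨⟨0, hℓ⟩⟩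
    · intro i _
      have := h i
      have : f (O ∪ A i) < (1 - 1 / (ℓ : ℝ)) * f O := this
      have hfO := hnn O
      have : f O - f (O ∪ A i) > f O - (1 - 1 / (ℓ : ℝ)) * f O := by linarith
      calc f O / ℓ = f O - (1 - 1 / (ℓ : ℝ)) * f O := by ring
        _ < f O - f (O ∪ A i) := by linarith
  have : ∑ i : Fin ℓ, (f O / ℓ) = f O := by
    rw [Finset.sum_const, Finset.card_univ, Fintype.card_fin]
    rw [nsmul_eq_mul]
    field_simp
  linarith
end

section
/- Let f be a submodular function on N, and suppose A = {a_1, ..., a_b} is built greedily in order a_1, ..., a_b, with A_j = {a_1,...,a_j}, such that there is an enumeration ô_1, ..., ô_b of a set Ô disjoint from A satisfying f(a_j | A_{j-1}) ≥ f(ô_j | A_{j-1}) for each j. Then 2·f(A) - f(∅) ≥ f(Ô ∪ A). -/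
/-- The prefix `{a_0, ..., a_{j-1}}` of an injectively enumerated set. -/
def prefixSet {N : Type*} [DecidableEq N] {b : ℕ} (a : Fin b → N) (j : ℕ) : Finset N :=
  (Finset.univ.filter (fun i : Fin b => (i : ℕ) < j)).image a

lemma mem_prefixSet {N : Type*} [DecidableEq N] {b : ℕ} (a : Fin b → N) (j : ℕ) (x : N) :
    x ∈ prefixSet a j ↔ ∃ i : Fin b, (i : ℕ) < j ∧ a i = x := by
  simp [prefixSet]

lemma prefixSet_zero {N : Type*} [DecidableEq N] {b : ℕ} (a : Fin b → N) :
    prefixSet a 0 = ∅ := by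
  ext x; simp [mem_prefixSet]

lemma prefixSet_succ {N : Type*} [DecidableEq N] {b : ℕ} (a : Fin b → N) (j : ℕ) (h : j < b) :
    prefixSet a (j + 1) = insert (a ⟨j, h⟩) (prefixSet a j) := by
  ext x
  simp only [mem_prefixSet, Finset.mem_insert]
  constructor
  · rintro ⟨i, hi, rfl⟩
    rcases Nat.lt_succ_iff_lt_or_eq.mp hi with hi' | hi'
    · exact Or.inr ⟨i, hi', rfl⟩
    · left; congr; exact Fin.ext hi'
  · rintro (rfl | ⟨i, hi, rfl⟩)
    · exact ⟨⟨j, h⟩, Nat.lt_succ_self j, rfl⟩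
    · exact ⟨i, Nat.lt_succ_of_lt hi, rfl⟩

lemma sub_marginal {N : Type*} [DecidableEq N] (f : Finset N → ℝ) (hsub : Submodular f)
    {S T : Finset N} (hST : S ⊆ T) {x : N} (hx : x ∉ T) :
    f (insert x T) - f T ≤ f (insert x S) - f S := by
  have h := hsub (insert x S) T
  have h1 : insert x S ∪ T = insert x T := by
    rw [Finset.insert_union, Finset.union_eq_right.mpr hST]
  have h2 : insert x S ∩ T = S := by
    rw [Finset.insert_inter_of_notMem hx, Finset.inter_eq_left.mpr hST]
  rw [h1, h2] at h
  linarith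

/-- greedy domination.  If `A = {a_1, ..., a_b}` is built greedily
and each greedy pick dominates the corresponding element of a disjoint set `Ô`,
then `2 f(A) - f(∅) ≥ f(Ô ∪ A)`. -/
theorem stmt2 {N : Type*} [DecidableEq N]
    (f : Finset N → ℝ) (hsub : Submodular f)
    (b : ℕ) (a ohat : Fin b → N)
    (ha : Function.Injective a) (ho : Function.Injective ohat)
    (hdisj : ∀ i j : Fin b, a i ≠ ohat j)
    (hdom : ∀ j : Fin b,
      f (insert (ohat j) (prefixSet a j)) - f (prefixSet a j) ≤
        f (insert (a j) (prefixSet a j)) - f (prefixSet a j)) :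
    f ((Finset.univ.image ohat) ∪ prefixSet a b) ≤ 2 * f (prefixSet a b) - f ∅ := by
  have himg : Finset.univ.image ohat = prefixSet ohat b := by
    unfold prefixSet
    congr 1
    ext i
    simp [i.isLt]
  have key : ∀ k, k ≤ b →
      f (prefixSet ohat k ∪ prefixSet a b) ≤ f (prefixSet a b) + f (prefixSet a k) - f ∅ := by
    intro k
    induction k with
    | zero =>
      intro _
      rw [prefixSet_zero, Finset.empty_union, prefixSet_zero]
      linarith
    | succ k ih =>
      intro hk1
      have hk : k < b := Nat.lt_of_succ_le hk1
      set jk : Fin b := ⟨k, hk⟩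
      have hsubset : prefixSet a k ⊆ prefixSet ohat k ∪ prefixSet a b := by
        intro x hx
        rcases (mem_prefixSet a k x).mp hx with ⟨i, hi, rfl⟩
        exact Finset.mem_union_right _ ((mem_prefixSet a b (a i)).mpr ⟨i, i.isLt, rfl⟩)
      have hnot : ohat jk ∉ prefixSet ohat k ∪ prefixSet a b := by
        intro hmem
        rcases Finset.mem_union.mp hmem with hm | hm
        · rcases (mem_prefixSet ohat k _).mp hm with ⟨i, hi, hieq⟩
          have : i = jk := ho hieq
          subst this
          exact absurd hi (lt_irrefl k)
        · rcases (mem_prefixSet a b _).mp hm with ⟨i, _, hieq⟩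
          exact hdisj i jk hieq
      have heq : prefixSet ohat (k + 1) ∪ prefixSet a b
          = insert (ohat jk) (prefixSet ohat k ∪ prefixSet a b) := by
        rw [prefixSet_succ ohat k hk, Finset.insert_union]
      have hmarg := sub_marginal f hsub hsubset hnot
      have hd := hdom jk
      have haeq : prefixSet a (k + 1) = insert (a jk) (prefixSet a k) :=
        prefixSet_succ a k hk
      have hih := ih (Nat.le_of_lt hk1)
      rw [heq, haeq]
      have : (jk : ℕ) = k := rfl
      rw [this] at hd
      linarith
  rw [himg]
  have := key b (le_refl b)
  linarith
end

section
/- Let f be a monotone submodular function on N and S ⊆ N a finite set of size s. If Q is a uniformly random subset of S of size q ≤ s, then E[f(Q)] ≥ (q/s)·f(S). -/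
lemma lemA {N : Type*} [DecidableEq N] (f : Finset N → ℝ) (hsub : Submodular f)
    (Q : Finset N) : ∀ D : Finset N, Disjoint D Q →
    f (Q ∪ D) + (D.card : ℝ) * f Q ≤ (∑ x ∈ D, f (insert x Q)) + f Q := by
  intro D
  induction D using Finset.induction_on with
  | empty => intro _; simp
  | @insert a D ha IH =>
    intro hd
    have haQ : a ∉ Q := by
      have := Finset.disjoint_left.mp hd (Finset.mem_insert_self a D)
      exact this
    have hdQ : Disjoint D Q := by
      exact Finset.disjoint_of_subset_left (Finset.subset_insert a D) hd
    have haQD : a ∉ Q ∪ D := by simp [haQ, ha]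
    have e1 : insert a Q ∪ (Q ∪ D) = insert a (Q ∪ D) := by
      ext x; simp only [Finset.mem_union, Finset.mem_insert]; tauto
    have e2 : insert a Q ∩ (Q ∪ D) = Q := by
      ext x
      simp only [Finset.mem_inter, Finset.mem_insert, Finset.mem_union]
      constructor
      · rintro ⟨h1, h2⟩
        rcases h1 with h1 | hx
        · exfalso
          rcases h2 with h2 | h2
          · exact haQ (h1 ▸ h2)
          · exact ha (h1 ▸ h2)
        · exact hx
      · intro h; exact ⟨Or.inr h, Or.inl h⟩
    have h1 := hsub (insert a Q) (Q ∪ D)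
    rw [e1, e2] at h1
    have h2 := IH hdQ
    have e3 : Q ∪ insert a D = insert a (Q ∪ D) := by
      ext x; simp only [Finset.mem_union, Finset.mem_insert]; tauto
    rw [e3, Finset.sum_insert ha, Finset.card_insert_of_notMem ha]
    push_cast
    linarith

lemma countLem {N : Type*} [DecidableEq N] (f : Finset N → ℝ) (S : Finset N) (q : ℕ) :
    ∑ Q ∈ Finset.powersetCard q S, ∑ x ∈ S \ Q, f (insert x Q)
      = ((q : ℝ) + 1) * ∑ R ∈ Finset.powersetCard (q + 1) S, f R := by
  have step1 : ∑ Q ∈ Finset.powersetCard q S, ∑ x ∈ S \ Q, f (insert x Q)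
      = ∑ R ∈ Finset.powersetCard (q + 1) S, ∑ x ∈ R, f R := by
    rw [Finset.sum_sigma', Finset.sum_sigma']
    apply Finset.sum_nbij' (i := fun p => (⟨insert p.2 p.1, p.2⟩ : Σ _ : Finset N, N))
      (j := fun p => (⟨p.1.erase p.2, p.2⟩ : Σ _ : Finset N, N))
    · rintro ⟨Q, x⟩ hp
      simp only [Finset.mem_sigma, Finset.mem_powersetCard, Finset.mem_sdiff] at hp ⊢
      obtain ⟨⟨hQS, hQc⟩, hxS, hxQ⟩ := hp
      refine ⟨⟨Finset.insert_subset hxS hQS, ?_⟩, Finset.mem_insert_self _ _⟩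
      rw [Finset.card_insert_of_notMem hxQ, hQc]
    · rintro ⟨R, x⟩ hp
      simp only [Finset.mem_sigma, Finset.mem_powersetCard, Finset.mem_sdiff] at hp ⊢
      obtain ⟨⟨hRS, hRc⟩, hxR⟩ := hp
      refine ⟨⟨(Finset.erase_subset x R).trans hRS, ?_⟩, hRS hxR, Finset.notMem_erase x R⟩
      rw [Finset.card_erase_of_mem hxR, hRc]
      omega
    · rintro ⟨Q, x⟩ hp
      simp only [Finset.mem_sigma, Finset.mem_powersetCard, Finset.mem_sdiff] at hp
      simp [Finset.erase_insert hp.2.2]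
    · rintro ⟨R, x⟩ hp
      simp only [Finset.mem_sigma, Finset.mem_powersetCard, Finset.mem_sdiff] at hp
      simp [Finset.insert_erase hp.2]
    · rintro ⟨Q, x⟩ hp
      rfl
  rw [step1]
  rw [Finset.mul_sum]
  apply Finset.sum_congr rfl
  intro R hR
  rw [Finset.mem_powersetCard] at hR
  rw [Finset.sum_const, nsmul_eq_mul, hR.2]
  push_cast
  ring

/-- random-subset bound.  For monotone submodular `f` and
`Q` a uniformly random `q`-subset of the `s`-element set `S` (`q ≤ s`),
`E[f(Q)] ≥ (q/s)·f(S)`, where the expectation is the average of `f` over all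
`q`-element subsets of `S`. -/
theorem stmt5 {N : Type*} [DecidableEq N]
    (f : Finset N → ℝ) (hsub : Submodular f)
    (hmono : ∀ A B : Finset N, A ⊆ B → f A ≤ f B)
    (hnn : ∀ S : Finset N, 0 ≤ f S)
    (S : Finset N) (q : ℕ) (hq : q ≤ S.card) :
    ((q : ℝ) / (S.card : ℝ)) * f S ≤
      (∑ Q ∈ Finset.powersetCard q S, f Q) / ((Finset.powersetCard q S).card : ℝ) := by
  have key : ∀ r : ℕ, r ≤ S.card →
      (r : ℝ) * (S.card.choose r : ℝ) * f S ≤ (S.card : ℝ) * ∑ Q ∈ Finset.powersetCard r S, f Q := by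
    intro r
    induction r with
    | zero =>
      intro _
      simp only [Nat.cast_zero, zero_mul, Finset.powersetCard_zero, Finset.sum_singleton]
      exact mul_nonneg (by positivity) (hnn ∅)
    | succ r ih =>
      intro hr1
      have hr : r ≤ S.card := Nat.le_of_succ_le hr1
      have hIH := ih hr
      -- star inequality: sum lemA over Q in powersetCard r S
      have hstar : (S.card.choose r : ℝ) * f S + (((S.card - r : ℕ) : ℝ) - 1) * ∑ Q ∈ Finset.powersetCard r S, f Q
          ≤ ((r : ℝ) + 1) * ∑ R ∈ Finset.powersetCard (r + 1) S, f R := by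
        have hsum : ∑ Q ∈ Finset.powersetCard r S, (f S + ((S.card - r : ℕ) : ℝ) * f Q)
            ≤ ∑ Q ∈ Finset.powersetCard r S, ((∑ x ∈ S \ Q, f (insert x Q)) + f Q) := by
          apply Finset.sum_le_sum
          intro Q hQ
          rw [Finset.mem_powersetCard] at hQ
          have hd : Disjoint (S \ Q) Q := Finset.sdiff_disjoint
          have := lemA f hsub Q (S \ Q) hd
          rw [Finset.union_sdiff_of_subset hQ.1, Finset.card_sdiff_of_subset hQ.1, hQ.2] at this
          exact this
        rw [Finset.sum_add_distrib, Finset.sum_add_distrib, countLem f S r] at hsum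
        rw [Finset.sum_const, Finset.card_powersetCard, nsmul_eq_mul, ← Finset.mul_sum] at hsum
        linarith
      have hid : ((S.card.choose (r + 1)) : ℝ) * ((r : ℝ) + 1) = (S.card.choose r : ℝ) * ((S.card : ℝ) - (r : ℝ)) := by
        have := Nat.choose_succ_right_eq S.card r
        have h2 : ((S.card.choose (r+1) * (r+1) : ℕ) : ℝ) = ((S.card.choose r * (S.card - r) : ℕ) : ℝ) := by
          rw [this]
        push_cast [Nat.cast_sub hr] at h2
        push_cast
        linarith
      have hcast : ((S.card - r : ℕ) : ℝ) = (S.card : ℝ) - (r : ℝ) := by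
        push_cast [Nat.cast_sub hr]; ring
      rw [hcast] at hstar
      have hm1 : (0:ℝ) ≤ (S.card : ℝ) - (r : ℝ) - 1 := by
        have : (r:ℝ) + 1 ≤ (S.card : ℝ) := by exact_mod_cast hr1
        linarith
      have hmul := mul_le_mul_of_nonneg_left hIH hm1
      have hsS : (0:ℝ) ≤ (S.card : ℝ) := by positivity
      have hmul2 := mul_le_mul_of_nonneg_left hstar hsS
      -- conclude
      have hrpos : (0:ℝ) < (r : ℝ) + 1 := by positivity
      have h4 : ((r:ℝ)+1) * (((S.card:ℝ) - r) * ((S.card.choose r : ℝ) * f S))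
          ≤ ((r:ℝ)+1) * ((S.card : ℝ) * ∑ R ∈ Finset.powersetCard (r + 1) S, f R) := by
        nlinarith [hmul, hmul2]
      have hid2 : ((r:ℝ)+1) * (((S.card.choose (r+1) : ℝ)) * (((r:ℝ)+1) * f S))
          = ((r:ℝ)+1) * (((S.card:ℝ) - r) * ((S.card.choose r : ℝ) * f S)) := by
        linear_combination ((r:ℝ)+1) * f S * hid
      have h5 := hid2.trans_le h4
      have h6 := le_of_mul_le_mul_left h5 hrpos
      push_cast
      linarith
  rcases Nat.eq_zero_or_pos S.card with h0 | hpos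
  · have hq0 : q = 0 := Nat.le_zero.mp (h0 ▸ hq)
    subst hq0
    rw [Finset.card_eq_zero] at h0
    subst h0
    simp [hnn ∅]
  · have hC : 0 < (S.card.choose q : ℝ) := by exact_mod_cast Nat.choose_pos hq
    have hs : 0 < (S.card : ℝ) := by exact_mod_cast hpos
    rw [Finset.card_powersetCard, div_mul_eq_mul_div, div_le_div_iff₀ hs hC]
    nlinarith [key q hq]
end

section
/- Let X be a hypergeometric random variable counting marked items when drawing n items without replacement from a population of m items containing K marked items, with mean μ = nK/m. Then for every t > 0, P[X - μ ≥ t] ≤ exp(-2t²/n). -/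
open Real

lemma hoeff_scalar (p : ℝ) (hp0 : 0 ≤ p) (hp1 : p ≤ 1) (s : ℝ) (hs : 0 ≤ s) :
    p * Real.exp s + (1 - p) ≤ Real.exp (p * s + s ^ 2 / 8) := by
  set A : ℝ → ℝ := fun x => 1 - p + p * Real.exp x with hAdef
  have Apos : ∀ x, 0 < A x := by
    intro x
    rcases eq_or_lt_of_le hp0 with h | h
    · simp [hAdef, ← h]
    · have := Real.exp_pos x
      have : 0 < p * Real.exp x := mul_pos h this
      simp only [hAdef]; linarith
  have hA : ∀ x, HasDerivAt A (p * Real.exp x) x := fun x =>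
    ((Real.hasDerivAt_exp x).const_mul p).const_add (1 - p)
  set h : ℝ → ℝ := fun x => x ^ 2 / 8 + p * x - Real.log (A x) with hhdef
  set h1 : ℝ → ℝ := fun x => x / 4 + p - p * Real.exp x / A x with hh1def
  have Hh : ∀ x, HasDerivAt h (h1 x) x := by
    intro x
    have d1 : HasDerivAt (fun x : ℝ => x ^ 2 / 8 + p * x) (x / 4 + p) x := by
      have := ((hasDerivAt_pow 2 x).div_const 8).add ((hasDerivAt_id x).const_mul p)
      convert this using 1
      · rfl
      · rfl
      · rfl
      · simp; ring
    have d2 : HasDerivAt (fun x => Real.log (A x)) (p * Real.exp x / A x) x :=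
      (hA x).log (Apos x).ne'
    exact d1.sub d2
  have Hh1 : ∀ x, HasDerivAt h1 (1 / 4 - p * Real.exp x * (1 - p) / (A x) ^ 2) x := by
    intro x
    have d1 : HasDerivAt (fun x : ℝ => x / 4 + p) (1 / 4) x := by
      simpa using ((hasDerivAt_id x).div_const 4).add_const p
    have d2 : HasDerivAt (fun x => p * Real.exp x / A x)
        ((p * Real.exp x * A x - p * Real.exp x * (p * Real.exp x)) / (A x) ^ 2) x :=
      ((Real.hasDerivAt_exp x).const_mul p).div (hA x) (Apos x).ne'
    have := d1.sub d2
    convert this using 1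
    have : A x = 1 - p + p * Real.exp x := rfl
    · rfl
    · rfl
    · rfl
    · field_simp
      ring
  have h1mono : Monotone h1 := by
    apply monotone_of_hasDerivAt_nonneg Hh1
    intro x
    have e := Real.exp_pos x
    have hAx : 0 < A x := Apos x
    have key : p * Real.exp x * (1 - p) / (A x) ^ 2 ≤ 1 / 4 := by
      rw [div_le_iff₀ (by positivity)]
      have : A x = (1 - p) + p * Real.exp x := rfl
      nlinarith [sq_nonneg (p * Real.exp x - (1 - p))]
    simp only [Pi.zero_apply]
    linarith
  have h1zero : h1 0 = 0 := by
    simp [hh1def, hAdef]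
  have h1nonneg : ∀ x, 0 ≤ x → 0 ≤ h1 x := fun x hx => h1zero ▸ h1mono hx
  have hmono : MonotoneOn h (Set.Ici 0) := by
    apply monotoneOn_of_hasDerivWithinAt_nonneg (f' := h1) (convex_Ici 0)
    · exact fun x _ => (Hh x).differentiableAt.continuousAt.continuousWithinAt
    · exact fun x hx => (Hh x).hasDerivWithinAt
    · intro x hx
      rw [interior_Ici] at hx
      exact h1nonneg x (le_of_lt hx)
  have hzero : h 0 = 0 := by simp [hhdef, hAdef]
  have hfinal : 0 ≤ h s := by
    have := hmono (Set.self_mem_Ici) (Set.mem_Ici.mpr hs) hs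
    linarith [hzero ▸ this]
  have hlog : Real.log (A s) ≤ p * s + s ^ 2 / 8 := by
    simp only [hhdef] at hfinal; linarith
  calc p * Real.exp s + (1 - p) = A s := by simp [hAdef]; ring
    _ = Real.exp (Real.log (A s)) := (Real.exp_log (Apos s)).symm
    _ ≤ Real.exp (p * s + s ^ 2 / 8) := Real.exp_le_exp.mpr hlog

lemma descFactorial_pow_le (K m j : ℕ) (hKm : K ≤ m) :
    K.descFactorial j * m ^ j ≤ m.descFactorial j * K ^ j := by
  induction j with
  | zero => simp
  | succ j ih =>
    rw [Nat.descFactorial_succ, Nat.descFactorial_succ, pow_succ, pow_succ]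
    have step : (K - j) * m ≤ (m - j) * K := by
      rcases le_or_gt K j with h | h
      · simp [Nat.sub_eq_zero_of_le h]
      · have h3 : j * K ≤ j * m := Nat.mul_le_mul_left j hKm
        have h4 : j ≤ m := le_trans (le_of_lt h) hKm
        have : (K - j) * m = K * m - j * m := by
          rw [Nat.sub_mul]
        have h2 : (m - j) * K = m * K - j * K := by
          rw [Nat.sub_mul]
        have hc : K * m = m * K := Nat.mul_comm K m
        omega
    calc (K - j) * K.descFactorial j * (m ^ j * m)
        = ((K - j) * m) * (K.descFactorial j * m ^ j) := by ring
      _ ≤ ((m - j) * K) * (m.descFactorial j * K ^ j) := Nat.mul_le_mul step ih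
      _ = (m - j) * m.descFactorial j * (K ^ j * K) := by ring

lemma choose_numeric (m K n j : ℕ) (hj : j ≤ n) (hn : n ≤ m) (hK : K ≤ m) :
    K.choose j * (m - j).choose (n - j) * m ^ j ≤ m.choose n * n.choose j * K ^ j := by
  rw [Nat.choose_mul (n := m) hj]
  have key : K.choose j * m ^ j ≤ m.choose j * K ^ j := by
    have h := descFactorial_pow_le K m j hK
    rw [Nat.descFactorial_eq_factorial_mul_choose, Nat.descFactorial_eq_factorial_mul_choose] at h
    have h' : j.factorial * (K.choose j * m ^ j) ≤ j.factorial * (m.choose j * K ^ j) := by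
      calc j.factorial * (K.choose j * m ^ j) = j.factorial * K.choose j * m ^ j := by ring
        _ ≤ j.factorial * m.choose j * K ^ j := h
        _ = j.factorial * (m.choose j * K ^ j) := by ring
    exact Nat.le_of_mul_le_mul_left h' (Nat.factorial_pos j)
  calc K.choose j * (m - j).choose (n - j) * m ^ j
      = (K.choose j * m ^ j) * (m - j).choose (n - j) := by ring
    _ ≤ (m.choose j * K ^ j) * (m - j).choose (n - j) := Nat.mul_le_mul_right _ key
    _ = m.choose j * (m - j).choose (n - j) * K ^ j := by ring

open Finset

-- number of n-subsets of univ containing a fixed j-subset S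
lemma card_supersets {α : Type*} [DecidableEq α] [Fintype α] (S : Finset α) (n : ℕ) (hjn : S.card ≤ n) :
    ((Finset.powersetCard n (Finset.univ : Finset α)).filter (fun D => S ⊆ D)).card
      = (Fintype.card α - S.card).choose (n - S.card) := by
  rw [← Finset.card_compl S, ← Finset.card_powersetCard]
  apply Finset.card_bij (fun D _ => D \ S)
  · intro D hD
    simp only [Finset.mem_filter, Finset.mem_powersetCard] at hD
    obtain ⟨⟨_, hcard⟩, hSD⟩ := hD
    simp only [Finset.mem_powersetCard]
    constructor
    · intro x hx
      simp only [Finset.mem_sdiff] at hx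
      simp [Finset.mem_compl, hx.2]
    · rw [Finset.card_sdiff_of_subset hSD, hcard]
  · intro D1 h1 D2 h2 heq
    simp only [Finset.mem_filter, Finset.mem_powersetCard] at h1 h2
    have : D1 \ S ∪ S = D2 \ S ∪ S := by rw [heq]
    rwa [Finset.sdiff_union_of_subset h1.2, Finset.sdiff_union_of_subset h2.2] at this
  · intro E hE
    simp only [Finset.mem_powersetCard] at hE
    obtain ⟨hEsub, hEcard⟩ := hE
    have hdisj : Disjoint E S := by
      rw [Finset.disjoint_right]
      intro x hxS hxE
      have := hEsub hxE
      simp [Finset.mem_compl] at this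
      exact this hxS
    refine ⟨E ∪ S, ?_, ?_⟩
    · simp only [Finset.mem_filter, Finset.mem_powersetCard]
      refine ⟨⟨Finset.subset_univ _, ?_⟩, Finset.subset_union_right⟩
      rw [Finset.card_union_of_disjoint hdisj, hEcard]
      omega
    · rw [Finset.union_sdiff_right, Finset.sdiff_eq_self_of_disjoint hdisj]

lemma count_pairs {α : Type*} [DecidableEq α] [Fintype α] (M : Finset α) (n j : ℕ) (hj : j ≤ n) :
    ∑ D ∈ Finset.powersetCard n (Finset.univ : Finset α), ((D ∩ M).card.choose j)
      = M.card.choose j * (Fintype.card α - j).choose (n - j) := by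
  have step1 : ∀ D : Finset α, (D ∩ M).card.choose j
      = ∑ S ∈ Finset.powersetCard j M, (if S ⊆ D then 1 else 0) := by
    intro D
    rw [← Finset.card_powersetCard j (D ∩ M), Finset.sum_boole, Nat.cast_id]
    congr 1
    ext S
    simp only [Finset.mem_powersetCard, Finset.mem_filter, Finset.subset_inter_iff]
    tauto
  simp_rw [step1]
  rw [Finset.sum_comm]
  have step2 : ∀ S ∈ Finset.powersetCard j M,
      (∑ D ∈ Finset.powersetCard n (Finset.univ : Finset α), if S ⊆ D then 1 else 0)
        = (Fintype.card α - j).choose (n - j) := by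
    intro S hS
    rw [Finset.mem_powersetCard] at hS
    rw [Finset.sum_boole, Nat.cast_id, card_supersets S n (hS.2 ▸ hj), hS.2]
  rw [Finset.sum_congr rfl step2, Finset.sum_const, smul_eq_mul, Finset.card_powersetCard]
open Finset

lemma expand_pow (u : ℝ) (c n : ℕ) (hc : c ≤ n) :
    u ^ c = ∑ j ∈ Finset.range (n + 1), (u - 1) ^ j * (c.choose j : ℝ) := by
  have h1 : u ^ c = ((u - 1) + 1) ^ c := by ring_nf
  rw [h1, add_pow]
  simp only [one_pow, mul_one]
  apply Finset.sum_subset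
  · exact Finset.range_subset_range.mpr (by omega)
  · intro j _ hj
    rw [Finset.mem_range, not_lt] at hj
    rw [Nat.choose_eq_zero_of_lt (by omega)]
    simp

lemma mgf_bound {α : Type*} [DecidableEq α] [Fintype α]
    (m K n : ℕ) (hm : Fintype.card α = m) (hmpos : 0 < m)
    (M : Finset α) (hM : M.card = K) (hn : n ≤ m)
    (u : ℝ) (hu : 1 ≤ u) :
    ∑ D ∈ Finset.powersetCard n (Finset.univ : Finset α), u ^ (D ∩ M).card
      ≤ (m.choose n : ℝ) * ((K / m) * u + (1 - K / m)) ^ n := by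
  have hK : K ≤ m := by rw [← hM, ← hm]; exact M.card_le_univ
  have hmR : (0 : ℝ) < m := by exact_mod_cast hmpos
  have hcard : ∀ D ∈ Finset.powersetCard n (Finset.univ : Finset α), (D ∩ M).card ≤ n := by
    intro D hD
    rw [Finset.mem_powersetCard] at hD
    exact le_trans (Finset.card_le_card Finset.inter_subset_left) hD.2.le
  calc ∑ D ∈ Finset.powersetCard n (Finset.univ : Finset α), u ^ (D ∩ M).card
      = ∑ D ∈ Finset.powersetCard n (Finset.univ : Finset α),
          ∑ j ∈ Finset.range (n + 1), (u - 1) ^ j * ((D ∩ M).card.choose j : ℝ) := by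
        apply Finset.sum_congr rfl
        intro D hD
        exact expand_pow u _ n (hcard D hD)
    _ = ∑ j ∈ Finset.range (n + 1), (u - 1) ^ j *
          ((K.choose j * (m - j).choose (n - j) : ℕ) : ℝ) := by
        rw [Finset.sum_comm]
        apply Finset.sum_congr rfl
        intro j hj
        rw [Finset.mem_range] at hj
        rw [← Finset.mul_sum, ← Nat.cast_sum, count_pairs M n j (by omega), hM, hm]
    _ ≤ ∑ j ∈ Finset.range (n + 1), (u - 1) ^ j *
          ((m.choose n : ℝ) * (n.choose j : ℝ) * (K / m : ℝ) ^ j) := by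
        apply Finset.sum_le_sum
        intro j hj
        rw [Finset.mem_range] at hj
        apply mul_le_mul_of_nonneg_left _ (pow_nonneg (by linarith) j)
        have hnum := choose_numeric m K n j (by omega) hn hK
        have hcast : ((K.choose j * (m - j).choose (n - j) : ℕ) : ℝ) * (m : ℝ) ^ j
            ≤ ((m.choose n * n.choose j : ℕ) : ℝ) * (K : ℝ) ^ j := by
          have := (Nat.cast_le (α := ℝ)).mpr hnum
          push_cast at this ⊢
          linarith
        rw [div_pow, ← mul_div_assoc, le_div_iff₀ (by positivity)]
        push_cast at hcast ⊢
        linarith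
    _ = (m.choose n : ℝ) * ∑ j ∈ Finset.range (n + 1),
          (K / m * (u - 1)) ^ j * ((n.choose j : ℝ)) := by
        rw [Finset.mul_sum]
        apply Finset.sum_congr rfl
        intro j _
        rw [mul_pow]
        ring
    _ = (m.choose n : ℝ) * (K / m * (u - 1) + 1) ^ n := by
        congr 1
        have h := expand_pow (K / m * (u - 1) + 1) n n le_rfl
        simp only [add_sub_cancel_right] at h
        exact h.symm
    _ = (m.choose n : ℝ) * ((K / m) * u + (1 - K / m)) ^ n := by
        congr 2
        ring
/-- Hoeffding's additive tail for the hypergeometric distribution.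
`X = |D ∩ M|` where `D` is a uniformly random `n`-subset of an `m`-element
population and `M` is a fixed `K`-subset; `μ = nK/m`.  For every `t > 0`,
`P[X - μ ≥ t] ≤ exp(-2t²/n)`. -/
theorem stmt7 {α : Type*} [DecidableEq α] [Fintype α]
    (m K n : ℕ) (hm : Fintype.card α = m) (hmpos : 0 < m)
    (M : Finset α) (hM : M.card = K) (hn : n ≤ m) (hnpos : 0 < n)
    (t : ℝ) (ht : 0 < t) :
    (((Finset.powersetCard n (Finset.univ : Finset α)).filter
        (fun D => t ≤ ((D ∩ M).card : ℝ) - (n : ℝ) * K / m)).card : ℝ) /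
      ((Finset.powersetCard n (Finset.univ : Finset α)).card : ℝ)
      ≤ Real.exp (-2 * t ^ 2 / n) := by
  have hnR : (0 : ℝ) < n := by exact_mod_cast hnpos
  have hmR : (0 : ℝ) < m := by exact_mod_cast hmpos
  have hK : K ≤ m := by rw [← hM, ← hm]; exact M.card_le_univ
  have hKR : (K : ℝ) ≤ m := by exact_mod_cast hK
  set s : ℝ := 4 * t / n with hs_def
  have hs : 0 < s := by positivity
  set p : ℝ := (K : ℝ) / m with hp_def
  have hp0 : 0 ≤ p := by positivity
  have hp1 : p ≤ 1 := by rw [hp_def, div_le_one hmR]; exact hKR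
  set μ : ℝ := (n : ℝ) * K / m with hmu_def
  set P := Finset.powersetCard n (Finset.univ : Finset α) with hP_def
  set F := P.filter (fun D => t ≤ ((D ∩ M).card : ℝ) - (n : ℝ) * K / m) with hF_def
  -- card of P
  have hPcard : (P.card : ℝ) = (m.choose n : ℝ) := by
    rw [hP_def, Finset.card_powersetCard, Finset.card_univ, hm]
  have hNpos : (0 : ℝ) < (m.choose n : ℝ) := by
    exact_mod_cast Nat.choose_pos hn
  -- step 1: F.card * exp (s * t) ≤ ∑_{D ∈ P} exp (s * (c_D - μ))
  have step1 : (F.card : ℝ) * Real.exp (s * t)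
      ≤ ∑ D ∈ P, Real.exp (s * (((D ∩ M).card : ℝ) - μ)) := by
    calc (F.card : ℝ) * Real.exp (s * t)
        = ∑ _D ∈ F, Real.exp (s * t) := by rw [Finset.sum_const, nsmul_eq_mul]
      _ ≤ ∑ D ∈ F, Real.exp (s * (((D ∩ M).card : ℝ) - μ)) := by
          apply Finset.sum_le_sum
          intro D hD
          rw [hF_def, Finset.mem_filter] at hD
          exact Real.exp_le_exp.mpr (mul_le_mul_of_nonneg_left hD.2 hs.le)
      _ ≤ ∑ D ∈ P, Real.exp (s * (((D ∩ M).card : ℝ) - μ)) :=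
          Finset.sum_le_sum_of_subset_of_nonneg (Finset.filter_subset _ _)
            (fun D _ _ => (Real.exp_pos _).le)
  -- step 2: rewrite via mgf
  have step2 : ∑ D ∈ P, Real.exp (s * (((D ∩ M).card : ℝ) - μ))
      = Real.exp (-(s * μ)) * ∑ D ∈ P, (Real.exp s) ^ (D ∩ M).card := by
    rw [Finset.mul_sum]
    apply Finset.sum_congr rfl
    intro D _
    rw [← Real.exp_nat_mul, ← Real.exp_add]
    congr 1
    ring
  have step3 : ∑ D ∈ P, (Real.exp s) ^ (D ∩ M).card
      ≤ (m.choose n : ℝ) * (p * Real.exp s + (1 - p)) ^ n :=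
    mgf_bound m K n hm hmpos M hM hn (Real.exp s) (Real.one_le_exp hs.le)
  have step4 : (p * Real.exp s + (1 - p)) ^ n ≤ Real.exp (n * (p * s + s ^ 2 / 8)) := by
    calc (p * Real.exp s + (1 - p)) ^ n
        ≤ (Real.exp (p * s + s ^ 2 / 8)) ^ n := by
          apply pow_le_pow_left₀ _ (hoeff_scalar p hp0 hp1 s hs.le)
          have := Real.exp_pos s
          nlinarith
      _ = Real.exp (n * (p * s + s ^ 2 / 8)) := by
          rw [← Real.exp_nat_mul]
  -- combine
  have hμp : μ = n * p := by rw [hmu_def, hp_def]; ring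
  have key : (F.card : ℝ) * Real.exp (s * t)
      ≤ (m.choose n : ℝ) * Real.exp (n * s ^ 2 / 8) := by
    have hexpμ : Real.exp (-(s * μ)) * Real.exp (n * (p * s + s ^ 2 / 8))
        = Real.exp (n * s ^ 2 / 8) := by
      rw [← Real.exp_add]
      congr 1
      rw [hμp]
      ring
    calc (F.card : ℝ) * Real.exp (s * t)
        ≤ ∑ D ∈ P, Real.exp (s * (((D ∩ M).card : ℝ) - μ)) := step1
      _ = Real.exp (-(s * μ)) * ∑ D ∈ P, (Real.exp s) ^ (D ∩ M).card := step2
      _ ≤ Real.exp (-(s * μ)) * ((m.choose n : ℝ) * (p * Real.exp s + (1 - p)) ^ n) :=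
          mul_le_mul_of_nonneg_left step3 (Real.exp_pos _).le
      _ ≤ Real.exp (-(s * μ)) * ((m.choose n : ℝ) * Real.exp (n * (p * s + s ^ 2 / 8))) :=
          mul_le_mul_of_nonneg_left (mul_le_mul_of_nonneg_left step4 hNpos.le)
            (Real.exp_pos _).le
      _ = (m.choose n : ℝ) * (Real.exp (-(s * μ)) * Real.exp (n * (p * s + s ^ 2 / 8))) := by
          ring
      _ = (m.choose n : ℝ) * Real.exp (n * s ^ 2 / 8) := by rw [hexpμ]
  have hFbound : (F.card : ℝ) ≤ (m.choose n : ℝ) * Real.exp (n * s ^ 2 / 8 - s * t) := by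
    have h1 : (F.card : ℝ) ≤ (m.choose n : ℝ) * Real.exp (n * s ^ 2 / 8) / Real.exp (s * t) := by
      rw [le_div_iff₀ (Real.exp_pos _)]
      exact key
    calc (F.card : ℝ) ≤ (m.choose n : ℝ) * Real.exp (n * s ^ 2 / 8) / Real.exp (s * t) := h1
      _ = (m.choose n : ℝ) * Real.exp (n * s ^ 2 / 8 - s * t) := by
          rw [Real.exp_sub]
          ring
  have hexpo : n * s ^ 2 / 8 - s * t = -2 * t ^ 2 / n := by
    rw [hs_def]
    field_simp
    ring
  rw [hexpo] at hFbound
  rw [div_le_iff₀ (by rw [hPcard]; exact hNpos), hPcard]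
  calc (F.card : ℝ) ≤ (m.choose n : ℝ) * Real.exp (-2 * t ^ 2 / n) := hFbound
    _ = Real.exp (-2 * t ^ 2 / n) * (m.choose n : ℝ) := by ring
end

section
/- Let f : 2^N → ℝ_{≥0} be submodular with positive item prices p, let s ∈ N, γ ∈ (0,1), and define the γ-split extension f* on N* = (N \ {s}) ∪ {σ₁, σ₂} by f*(S) = f(Ŝ) + γ·f(s | Ŝ)·1[σ₁ ∈ S] + (1-γ)·f(s | Ŝ)·1[σ₂ ∈ S], where Ŝ = S \ {σ₁, σ₂}. Then f* is non-negative and submodular on N*. -/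
/-- The `γ`-split extension of `f` at element `s`, with fragments `σ₁, σ₂`. -/
noncomputable def gammaSplit {α : Type*} [DecidableEq α]
    (f : Finset α → ℝ) (s σ₁ σ₂ : α) (γ : ℝ) (S : Finset α) : ℝ :=
  f (S \ {σ₁, σ₂}) +
    γ * (f (insert s (S \ {σ₁, σ₂})) - f (S \ {σ₁, σ₂})) * (if σ₁ ∈ S then 1 else 0) +
    (1 - γ) * (f (insert s (S \ {σ₁, σ₂})) - f (S \ {σ₁, σ₂})) * (if σ₂ ∈ S then 1 else 0)

/-- the `γ`-split extension of a non-negative submodular `f`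
is non-negative and submodular on the split ground set
`N* = (N \ {s}) ∪ {σ₁, σ₂}`. -/
theorem stmt10 {α : Type*} [DecidableEq α]
    (f : Finset α → ℝ) (Nset : Finset α)
    (hsub : ∀ X Y : Finset α, X ⊆ Nset → Y ⊆ Nset →
      f (X ∪ Y) + f (X ∩ Y) ≤ f X + f Y)
    (hnn : ∀ S : Finset α, S ⊆ Nset → 0 ≤ f S)
    (s σ₁ σ₂ : α) (hs : s ∈ Nset) (hσ₁ : σ₁ ∉ Nset) (hσ₂ : σ₂ ∉ Nset)
    (hne : σ₁ ≠ σ₂)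
    (γ : ℝ) (hγ0 : 0 < γ) (hγ1 : γ < 1) :
    (∀ S : Finset α, S ⊆ insert σ₁ (insert σ₂ (Nset.erase s)) →
        0 ≤ gammaSplit f s σ₁ σ₂ γ S) ∧
    (∀ X Y : Finset α, X ⊆ insert σ₁ (insert σ₂ (Nset.erase s)) →
        Y ⊆ insert σ₁ (insert σ₂ (Nset.erase s)) →
        gammaSplit f s σ₁ σ₂ γ (X ∪ Y) + gammaSplit f s σ₁ σ₂ γ (X ∩ Y) ≤
          gammaSplit f s σ₁ σ₂ γ X + gammaSplit f s σ₁ σ₂ γ Y) := by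
  have key : ∀ S : Finset α, S ⊆ insert σ₁ (insert σ₂ (Nset.erase s)) →
      S \ {σ₁, σ₂} ⊆ Nset.erase s := by
    intro S hS x hx
    simp only [Finset.mem_sdiff, Finset.mem_insert, Finset.mem_singleton] at hx
    have := hS hx.1
    simp only [Finset.mem_insert] at this
    tauto
  have hγ0' : (0:ℝ) ≤ γ := hγ0.le
  have hγ1' : (0:ℝ) ≤ 1 - γ := by linarith
  constructor
  · intro S hS
    have hS2 : S \ {σ₁, σ₂} ⊆ Nset := (key S hS).trans (Finset.erase_subset _ _)
    have h1 := hnn _ hS2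
    have h2 := hnn _ (Finset.insert_subset hs hS2)
    unfold gammaSplit
    by_cases hx : σ₁ ∈ S <;> by_cases hy : σ₂ ∈ S <;>
      simp only [hx, hy, if_true, if_false, mul_one, mul_zero, add_zero] <;>
      nlinarith [mul_nonneg hγ0' h1, mul_nonneg hγ0' h2,
        mul_nonneg hγ1' h1, mul_nonneg hγ1' h2]
  · intro X Y hX hY
    have hAe := key X hX
    have hBe := key Y hY
    have hU : (X ∪ Y) \ {σ₁, σ₂} = (X \ {σ₁, σ₂}) ∪ (Y \ {σ₁, σ₂}) := by
      ext x
      simp only [Finset.mem_sdiff, Finset.mem_union]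
      tauto
    have hI : (X ∩ Y) \ {σ₁, σ₂} = (X \ {σ₁, σ₂}) ∩ (Y \ {σ₁, σ₂}) := by
      ext x
      simp only [Finset.mem_sdiff, Finset.mem_inter]
      tauto
    unfold gammaSplit
    rw [hU, hI]
    set A := X \ {σ₁, σ₂} with hAdef
    set B := Y \ {σ₁, σ₂} with hBdef
    have hAN : A ⊆ Nset := hAe.trans (Finset.erase_subset _ _)
    have hBN : B ⊆ Nset := hBe.trans (Finset.erase_subset _ _)
    have hsA : s ∉ A := fun h => (Finset.notMem_erase s Nset) (hAe h)
    have hsB : s ∉ B := fun h => (Finset.notMem_erase s Nset) (hBe h)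
    have H1 := hsub A B hAN hBN
    have e2u : insert s A ∪ insert s B = insert s (A ∪ B) := by
      ext x
      simp only [Finset.mem_union, Finset.mem_insert]
      tauto
    have e2i : insert s A ∩ insert s B = insert s (A ∩ B) := by
      ext x
      simp only [Finset.mem_inter, Finset.mem_insert]
      tauto
    have H2 := hsub (insert s A) (insert s B)
      (Finset.insert_subset hs hAN) (Finset.insert_subset hs hBN)
    rw [e2u, e2i] at H2
    have e3u : insert s A ∪ (A ∪ B) = insert s (A ∪ B) := by
      ext x
      simp only [Finset.mem_union, Finset.mem_insert]
      tauto
    have e3i : insert s A ∩ (A ∪ B) = A := by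
      ext x
      simp only [Finset.mem_inter, Finset.mem_insert, Finset.mem_union]
      constructor
      · rintro ⟨rfl | hxa, hab⟩
        · rcases hab with h | h
          · exact absurd h hsA
          · exact absurd h hsB
        · exact hxa
      · intro h
        exact ⟨Or.inr h, Or.inl h⟩
    have H3 := hsub (insert s A) (A ∪ B)
      (Finset.insert_subset hs hAN) (Finset.union_subset hAN hBN)
    rw [e3u, e3i] at H3
    have e4u : (A ∪ B) ∪ insert s B = insert s (A ∪ B) := by
      ext x
      simp only [Finset.mem_union, Finset.mem_insert]
      tauto
    have e4i : (A ∪ B) ∩ insert s B = B := by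
      ext x
      simp only [Finset.mem_inter, Finset.mem_insert, Finset.mem_union]
      constructor
      · rintro ⟨hab, rfl | hxb⟩
        · rcases hab with h | h
          · exact absurd h hsA
          · exact absurd h hsB
        · exact hxb
      · intro h
        exact ⟨Or.inr h, Or.inr h⟩
    have H4 := hsub (A ∪ B) (insert s B)
      (Finset.union_subset hAN hBN) (Finset.insert_subset hs hBN)
    rw [e4u, e4i] at H4
    have s1 := mul_le_mul_of_nonneg_left H1 hγ0'
    have s2 := mul_le_mul_of_nonneg_left H2 hγ0'
    have s3 := mul_le_mul_of_nonneg_left H3 hγ0'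
    have s4 := mul_le_mul_of_nonneg_left H4 hγ0'
    have t1 := mul_le_mul_of_nonneg_left H1 hγ1'
    have t2 := mul_le_mul_of_nonneg_left H2 hγ1'
    have t3 := mul_le_mul_of_nonneg_left H3 hγ1'
    have t4 := mul_le_mul_of_nonneg_left H4 hγ1'
    by_cases p1 : σ₁ ∈ X <;> by_cases p2 : σ₁ ∈ Y <;>
      by_cases q1 : σ₂ ∈ X <;> by_cases q2 : σ₂ ∈ Y <;>
      simp only [Finset.mem_union, Finset.mem_inter, p1, p2, q1, q2,
        true_or, or_true, false_or, or_false, true_and, and_true, false_and,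
        and_false, and_self, or_self, if_true, if_false, mul_one, mul_zero,
        add_zero] <;>
      linarith
end

section
/- Let f be a non-negative submodular function on N, let O, S_t ⊆ N, and let W ⊆ N \ S_t be a finite set. Then if w is chosen uniformly at random from W, E[f(O ∪ S_t ∪ {w})] ≥ (1 - 1/|W|)·f(O ∪ S_t). -/
lemma submod_sum_marginals {N : Type*} [DecidableEq N]
    (f : Finset N → ℝ) (hsub : Submodular f) (A : Finset N) (W : Finset N) :
    f (A ∪ W) - f A ≤ ∑ w ∈ W, (f (insert w A) - f A) := by
  induction W using Finset.induction_on with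
  | empty => simp
  | @insert v W hv ih =>
    have key := hsub (A ∪ W) (insert v A)
    have h1 : (A ∪ W) ∪ insert v A = A ∪ insert v W := by
      ext x; simp; tauto
    have h2 : (A ∪ W) ∩ insert v A = A := by
      ext x
      simp only [Finset.mem_inter, Finset.mem_union, Finset.mem_insert]
      constructor
      · rintro ⟨h | h, rfl | h'⟩ <;> first | assumption | exact absurd h hv
      · tauto
    rw [h1, h2] at key
    rw [Finset.sum_insert hv]
    linarith

/-- single-step window degradation.  For non-negative submodular
`f` and a nonempty window `W` disjoint from `S_t`, a uniformly random pick
`w ∈ W` satisfies `E[f(O ∪ S_t ∪ {w})] ≥ (1 - 1/|W|)·f(O ∪ S_t)`. -/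
theorem stmt13 {N : Type*} [DecidableEq N]
    (f : Finset N → ℝ) (hsub : Submodular f) (hnn : ∀ S : Finset N, 0 ≤ f S)
    (O St W : Finset N) (hW : W.Nonempty) (hdisj : Disjoint W St) :
    (1 - 1 / (W.card : ℝ)) * f (O ∪ St) ≤
      (∑ w ∈ W, f (insert w (O ∪ St))) / (W.card : ℝ) := by
  set A := O ∪ St
  have hc : (0:ℝ) < W.card := by
    exact_mod_cast Finset.card_pos.mpr hW
  have hkey := submod_sum_marginals f hsub A W
  have hsum : ∑ w ∈ W, (f (insert w A) - f A)
      = (∑ w ∈ W, f (insert w A)) - W.card * f A := by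
    rw [Finset.sum_sub_distrib]
    simp [mul_comm]
  have h0 := hnn (A ∪ W)
  rw [hsum] at hkey
  rw [le_div_iff₀ hc]
  have hone : (1 - 1 / (W.card:ℝ)) * f A * W.card = W.card * f A - f A := by
    field_simp
  linarith
end

section
/- Iterating the single-step window degradation bound: if a random process S_0 = ∅, S_{t+1} = S_t ∪ {w_t} with w_t chosen uniformly from a window W_t of size exactly ωk disjoint from S_t satisfies E[f(O ∪ S_{t+1}) | S_t] ≥ (1 - 1/(ωk))·f(O ∪ S_t) at each step, then after m ≤ k steps E[f(O ∪ S_m)] ≥ (1 - 1/(ωk))^k · f(O) ≥ e^{-1/ω}·(1 - 1/(ω²k))·f(O). -/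
/-- iterated window degradation.  Model the random process on a
finite probability space `(Ω, prob)`.  If `S 0 = ∅` and at each step
`E[f(O ∪ S (t+1))] ≥ (1 - 1/(ωk))·E[f(O ∪ S t)]`, then after `m ≤ k` steps
`E[f(O ∪ S m)] ≥ (1 - 1/(ωk))^k · f(O) ≥ e^{-1/ω}(1 - 1/(ω²k))·f(O)`. -/
theorem stmt14 {N Ω : Type*} [DecidableEq N] [Fintype Ω]
    (f : Finset N → ℝ) (hnn : ∀ S : Finset N, 0 ≤ f S)
    (O : Finset N)
    (ω : ℝ) (hω : 1 ≤ ω) (k : ℕ) (hk : 1 ≤ k) (hωk : 2 ≤ ω * k)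
    (prob : Ω → ℝ) (hp0 : ∀ o, 0 ≤ prob o) (hp1 : ∑ o, prob o = 1)
    (S : ℕ → Ω → Finset N) (hS0 : ∀ o, S 0 o = (∅ : Finset N))
    (m : ℕ) (hm : m ≤ k)
    (hstep : ∀ t < m,
      (1 - 1 / (ω * k)) * (∑ o, prob o * f (O ∪ S t o)) ≤
        ∑ o, prob o * f (O ∪ S (t + 1) o)) :
    (1 - 1 / (ω * k)) ^ k * f O ≤ ∑ o, prob o * f (O ∪ S m o) ∧
      Real.exp (-1 / ω) * (1 - 1 / (ω ^ 2 * k)) * f O ≤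
        (1 - 1 / (ω * k)) ^ k * f O := by
  set x : ℝ := ω * k with hxdef
  have hx0 : (0:ℝ) < x := lt_of_lt_of_le (by norm_num) hωk
  have hk0 : (0:ℝ) < (k:ℝ) := by exact_mod_cast hk
  have hcnn : (0:ℝ) ≤ 1 - 1 / x := by
    have : 1 / x ≤ 1 / 2 := by
      apply one_div_le_one_div_of_le <;> linarith
    linarith
  have hc1 : 1 - 1 / x ≤ 1 := by
    have : 0 < 1 / x := by positivity
    linarith
  have key : ∀ n, n ≤ m → (1 - 1 / x) ^ n * f O ≤ ∑ o, prob o * f (O ∪ S n o) := by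
    intro n
    induction n with
    | zero =>
      intro _
      have : ∀ o : Ω, f (O ∪ S 0 o) = f O := by
        intro o; rw [hS0 o, Finset.union_empty]
      simp only [this, pow_zero, one_mul, ← Finset.sum_mul, hp1]
      simp
    | succ n ih =>
      intro hn
      have hn' : n ≤ m := Nat.le_of_succ_le hn
      have h1 := ih hn'
      have h2 := hstep n (Nat.lt_of_succ_le hn)
      calc (1 - 1 / x) ^ (n + 1) * f O = (1 - 1 / x) * ((1 - 1 / x) ^ n * f O) := by
            ring
        _ ≤ (1 - 1 / x) * (∑ o, prob o * f (O ∪ S n o)) :=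
            mul_le_mul_of_nonneg_left h1 hcnn
        _ ≤ ∑ o, prob o * f (O ∪ S (n + 1) o) := h2
  have hpow : (1 - 1 / x) ^ k ≤ (1 - 1 / x) ^ m :=
    pow_le_pow_of_le_one hcnn hc1 hm
  constructor
  · calc (1 - 1 / x) ^ k * f O ≤ (1 - 1 / x) ^ m * f O :=
        mul_le_mul_of_nonneg_right hpow (hnn O)
      _ ≤ _ := key m le_rfl
  · -- analytic bound
    have hfac : Real.exp (-(1/x)) * (1 - 1 / x ^ 2) ≤ 1 - 1 / x := by
      have h1 : 1 + 1 / x ≤ Real.exp (1 / x) := by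
        linarith [Real.add_one_le_exp (1 / x)]
      have h2 : Real.exp (-(1/x)) * (1 + 1 / x) ≤ 1 := by
        rw [Real.exp_neg, inv_mul_le_iff₀ (Real.exp_pos _), mul_one]
        linarith
      have heq : (1 - 1 / x ^ 2) = (1 - 1 / x) * (1 + 1 / x) := by
        field_simp; ring
      rw [heq]
      calc Real.exp (-(1/x)) * ((1 - 1 / x) * (1 + 1 / x))
          = (1 - 1 / x) * (Real.exp (-(1/x)) * (1 + 1 / x)) := by ring
        _ ≤ (1 - 1 / x) * 1 := mul_le_mul_of_nonneg_left h2 hcnn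
        _ = 1 - 1 / x := by ring
    have hlhsnn : (0:ℝ) ≤ Real.exp (-(1/x)) * (1 - 1 / x ^ 2) := by
      have hx2 : 1 / x ^ 2 ≤ 1 := by
        rw [div_le_one (by positivity)]
        nlinarith
      have := Real.exp_pos (-(1/x))
      nlinarith
    have hpowk : (Real.exp (-(1/x)) * (1 - 1 / x ^ 2)) ^ k ≤ (1 - 1 / x) ^ k :=
      pow_le_pow_left₀ hlhsnn hfac k
    have hexp : (Real.exp (-(1/x))) ^ k = Real.exp (-1/ω) := by
      rw [← Real.exp_nat_mul]
      congr 1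
      rw [hxdef]
      field_simp
    have hbern : 1 - 1 / (ω ^ 2 * k) ≤ (1 - 1 / x ^ 2) ^ k := by
      have hx21 : (1:ℝ) ≤ x ^ 2 := by nlinarith
      have hx2le : 1 / x ^ 2 ≤ 1 := by
        rw [div_le_one (by positivity)]; exact hx21
      have h := one_add_mul_le_pow (a := -(1 / x ^ 2)) (by linarith) k
      rw [show (1:ℝ) + -(1 / x ^ 2) = 1 - 1 / x ^ 2 from by ring] at h
      have heq : 1 + (k:ℝ) * -(1 / x ^ 2) = 1 - 1 / (ω ^ 2 * k) := by
        rw [hxdef]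
        field_simp
        ring
      linarith [heq ▸ h]
    have hexpnn : (0:ℝ) ≤ Real.exp (-1/ω) := (Real.exp_pos _).le
    have : Real.exp (-1/ω) * (1 - 1 / (ω ^ 2 * k)) ≤ (1 - 1 / x) ^ k := by
      calc Real.exp (-1/ω) * (1 - 1 / (ω ^ 2 * k))
          ≤ Real.exp (-1/ω) * (1 - 1 / x ^ 2) ^ k :=
            mul_le_mul_of_nonneg_left hbern hexpnn
        _ = (Real.exp (-(1/x))) ^ k * (1 - 1 / x ^ 2) ^ k := by rw [hexp]
        _ = (Real.exp (-(1/x)) * (1 - 1 / x ^ 2)) ^ k := (mul_pow _ _ _).symm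
        _ ≤ (1 - 1 / x) ^ k := hpowk
    exact mul_le_mul_of_nonneg_right this (hnn O)
end
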